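/- Let H be a closed subgroup of U(n) and a ∈ L^∞(𝔹^n). For every λ > -1 the following are equivalent: (1) a is H-invariant, i.e. a ∘ A = a for every A ∈ H; (2) the Toeplitz operator T_a^{(λ)} intertwines the restriction π_λ|_H, i.e. T_a^{(λ)} π_λ(A) = π_λ(A) T_a^{(λ)} for every A ∈ H. -/

import Mathlib

open MeasureTheory Metric Complex
open scoped ENNReal ComplexConjugate TensorProduct

set_option maxHeartbeats 1000000
set_option synthInstance.maxHeartbeats 1000000
set_option linter.unusedSectionVars false

noncomputable section

namespace Bergman

variable (ι : Type*) [Fintype ι] [DecidableEq ι]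

/-- The complex Euclidean space with coordinates indexed by `ι`. -/
abbrev EC := EuclideanSpace ℂ ι

instance : MeasurableSpace (EC ι) := WithLp.measurableSpace 2 (ι → ℂ)
instance : BorelSpace (EC ι) := PiLp.borelSpace 2

/-- The open unit ball `𝔹 ⊆ ℂ^ι`. -/
abbrev UB : Set (EC ι) := Metric.ball (0 : EC ι) 1

/-- The normalizing constant `c_λ = Γ(n+λ+1)/(π^n Γ(λ+1))`. -/
def normConst (lam : ℝ) : ℝ :=
  Real.Gamma ((Fintype.card ι : ℝ) + lam + 1) /
    (Real.pi ^ (Fintype.card ι) * Real.Gamma (lam + 1))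

/-- The density `c_λ (1 - |z|²)^λ` of the weighted measure. -/
def wdens (lam : ℝ) (z : EC ι) : ℝ≥0∞ :=
  ENNReal.ofReal (normConst ι lam * (1 - ‖z‖ ^ 2) ^ lam)

/-- The weighted measure `v_λ` on the unit ball. -/
def mu (lam : ℝ) : Measure (EC ι) :=
  (volume.restrict (UB ι)).withDensity (wdens ι lam)

/-- The subspace of `L²(𝔹, v_λ)` of elements admitting a holomorphic representative. -/
def holo (lam : ℝ) : Submodule ℂ (Lp ℂ 2 (mu ι lam)) where
  carrier := {f | ∃ g : EC ι → ℂ, DifferentiableOn ℂ g (UB ι) ∧ (f : EC ι → ℂ) =ᵐ[mu ι lam] g}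
  zero_mem' := ⟨0, differentiableOn_const 0, Lp.coeFn_zero ℂ 2 (mu ι lam)⟩
  add_mem' := by
    rintro f₁ f₂ ⟨g₁, hg₁, he₁⟩ ⟨g₂, hg₂, he₂⟩
    exact ⟨g₁ + g₂, hg₁.add hg₂,
      (Lp.coeFn_add f₁ f₂).trans ((he₁.add he₂) : _)⟩
  smul_mem' := by
    rintro c f ⟨g, hg, he⟩
    exact ⟨c • g, hg.const_smul c,
      (Lp.coeFn_smul c f).trans (he.const_smul c)⟩

/-- The weighted Bergman space `A²_λ(𝔹)` (as the closed subspace of `L²(𝔹, v_λ)` of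
holomorphic elements; we take the topological closure to record closedness). -/
def A2 (lam : ℝ) : Submodule ℂ (Lp ℂ 2 (mu ι lam)) :=
  (holo ι lam).topologicalClosure

instance (lam : ℝ) : CompleteSpace (A2 ι lam) :=
  (holo ι lam).isClosed_topologicalClosure.completeSpace_coe

/-- The Bergman orthogonal projection `B_λ : L²(𝔹, v_λ) → A²_λ(𝔹)`. -/
def bProj (lam : ℝ) : Lp ℂ 2 (mu ι lam) →L[ℂ] A2 ι lam :=
  (A2 ι lam).orthogonalProjectionOnto

end Bergman
namespace Bergman
variable {ι : Type*} [Fintype ι] [DecidableEq ι]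

/-- Multiplication by an essentially bounded symbol, as a linear map on `L²`. -/
def mulSymbLin {lam : ℝ} {a : EC ι → ℂ} (ha : MemLp a ⊤ (mu ι lam)) :
    Lp ℂ 2 (mu ι lam) →ₗ[ℂ] Lp ℂ 2 (mu ι lam) where
  toFun f := ((Lp.memLp f).smul ha).toLp (a • (f : EC ι → ℂ))
  map_add' f g := by
    rw [← MemLp.toLp_add]
    refine MemLp.toLp_congr _ _ ?_
    filter_upwards [Lp.coeFn_add f g] with x hx
    simp only [Pi.smul_apply', Pi.add_apply, hx, smul_add]
  map_smul' c f := by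
    simp only [RingHom.id_apply]
    rw [← MemLp.toLp_const_smul c (((Lp.memLp f).smul ha))]
    refine MemLp.toLp_congr ((Lp.memLp (c • f)).smul ha) _ ?_
    filter_upwards [Lp.coeFn_smul c f] with x hx
    simp only [Pi.smul_apply', Pi.smul_apply, Pi.mul_apply, hx, smul_eq_mul]
    ring

lemma mulSymbLin_bound {lam : ℝ} {a : EC ι → ℂ} (ha : MemLp a ⊤ (mu ι lam))
    (f : Lp ℂ 2 (mu ι lam)) :
    ‖mulSymbLin ha f‖ ≤ (eLpNorm a ⊤ (mu ι lam)).toReal * ‖f‖ := by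
  rw [Lp.norm_def, Lp.norm_def]
  have h1 : eLpNorm (mulSymbLin ha f : EC ι → ℂ) 2 (mu ι lam)
      = eLpNorm (a • (f : EC ι → ℂ)) 2 (mu ι lam) :=
    eLpNorm_congr_ae (((Lp.memLp f).smul ha).coeFn_toLp)
  rw [h1, ← ENNReal.toReal_mul]
  refine ENNReal.toReal_mono ?_ ?_
  · exact ENNReal.mul_ne_top ha.eLpNorm_ne_top (Lp.memLp f).eLpNorm_ne_top
  · exact eLpNorm_smul_le_mul_eLpNorm (Lp.aestronglyMeasurable f) ha.aestronglyMeasurable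

/-- Multiplication by an essentially bounded symbol, as a bounded operator on `L²`. -/
def mulSymb {lam : ℝ} {a : EC ι → ℂ} (ha : MemLp a ⊤ (mu ι lam)) :
    Lp ℂ 2 (mu ι lam) →L[ℂ] Lp ℂ 2 (mu ι lam) :=
  LinearMap.mkContinuous (mulSymbLin ha) ((eLpNorm a ⊤ (mu ι lam)).toReal)
    (mulSymbLin_bound ha)

/-- The Toeplitz operator `T_a^{(λ)} = B_λ (a ·)` on the weighted Bergman space. -/
def toeplitz {lam : ℝ} {a : EC ι → ℂ} (ha : MemLp a ⊤ (mu ι lam)) :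
    A2 ι lam →L[ℂ] A2 ι lam :=
  (bProj ι lam).comp ((mulSymb ha).comp (A2 ι lam).subtypeL)

end Bergman
namespace Bergman
variable {ι : Type*} [Fintype ι] [DecidableEq ι]

/-- The unitary group `U(n)` (for coordinates indexed by `ι`). -/
abbrev UG (ι : Type*) [Fintype ι] [DecidableEq ι] := Matrix.unitaryGroup ι ℂ

instance : MeasurableSpace (Matrix ι ι ℂ) :=
  inferInstanceAs (MeasurableSpace (ι → ι → ℂ))

instance : MeasurableSpace (UG ι) := Subtype.instMeasurableSpace

/-- The linear isometry of `ℂ^ι` induced by a unitary matrix. -/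
def uIso (A : UG ι) : EC ι ≃ₗᵢ[ℂ] EC ι :=
  Unitary.linearIsometryEquiv
    (Unitary.map (StarMonoidHom.ofClass (Matrix.toEuclideanCLM (𝕜 := ℂ) (n := ι))) A)

/-- The same map as a real-linear isometry. -/
def uIsoR (A : UG ι) : EC ι ≃ₗᵢ[ℝ] EC ι where
  toLinearEquiv := (uIso A).toLinearEquiv.restrictScalars ℝ
  norm_map' := (uIso A).norm_map

lemma uIso_measurable (A : UG ι) : Measurable (uIso A) :=
  (uIso A).continuous.measurable

lemma measurable_rpow_const (lam : ℝ) : Measurable (fun x : ℝ => x ^ lam) :=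
  measurable_of_continuousOn_compl_singleton 0
    (fun x hx => (Real.continuousAt_rpow_const x lam (.inl hx)).continuousWithinAt)

lemma wdens_measurable (lam : ℝ) : Measurable (wdens ι lam) := by
  apply ENNReal.measurable_ofReal.comp
  apply Measurable.const_mul
  exact (measurable_rpow_const lam).comp
    (measurable_const.sub (measurable_norm.pow_const 2))

lemma uIso_preimage_ball (A : UG ι) : (uIso A) ⁻¹' (UB ι) = UB ι := by
  ext z
  simp only [Set.mem_preimage, UB, mem_ball_zero_iff, (uIso A).norm_map]

lemma uIso_wdens (lam : ℝ) (A : UG ι) : wdens ι lam ∘ (uIso A) = wdens ι lam := by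
  funext z
  simp only [Function.comp_apply, wdens, (uIso A).norm_map]

/-- Auxiliary: a measure preserving map transports a `withDensity` measure. -/
lemma mp_withDensity {α β : Type*} [MeasurableSpace α] [MeasurableSpace β]
    {f : α → β} {μ : Measure α} {ν : Measure β} (hf : MeasurePreserving f μ ν)
    {w : β → ℝ≥0∞} (hw : Measurable w) :
    MeasurePreserving f (μ.withDensity (w ∘ f)) (ν.withDensity w) := by
  refine ⟨hf.measurable, ?_⟩
  ext s hs
  rw [Measure.map_apply hf.measurable hs, withDensity_apply _ (hf.measurable hs),
    withDensity_apply _ hs, ← hf.setLIntegral_comp_preimage hs hw]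
  rfl

/-- Unitary transformations preserve the weighted measure `v_λ`. -/
lemma uIso_measurePreserving (lam : ℝ) (A : UG ι) :
    MeasurePreserving (uIso A) (mu ι lam) (mu ι lam) := by
  have hvol : MeasurePreserving (uIso A) volume volume :=
    (uIsoR A).measurePreserving
  have hres : MeasurePreserving (uIso A) (volume.restrict (UB ι)) (volume.restrict (UB ι)) := by
    have := hvol.restrict_preimage (s := UB ι) measurableSet_ball
    rwa [uIso_preimage_ball] at this
  have := mp_withDensity hres (wdens_measurable lam)
  rwa [uIso_wdens] at this

/-- The unitary representation `π_λ` of `U(n)` on `L²(𝔹, v_λ)`; `π_λ(A) f = f ∘ A⁻¹`. -/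
def piL2 (lam : ℝ) (A : UG ι) : Lp ℂ 2 (mu ι lam) →ₗᵢ[ℂ] Lp ℂ 2 (mu ι lam) :=
  Lp.compMeasurePreservingₗᵢ ℂ (⇑(uIso (A⁻¹))) (uIso_measurePreserving lam A⁻¹)

lemma uIso_mapsTo_ball (A : UG ι) : Set.MapsTo (uIso A) (UB ι) (UB ι) := by
  intro z hz
  have : z ∈ (uIso A) ⁻¹' (UB ι) := by rw [uIso_preimage_ball]; exact hz
  exact this

lemma piL2_mem_A2 (lam : ℝ) (A : UG ι) {f : Lp ℂ 2 (mu ι lam)} (hf : f ∈ A2 ι lam) :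
    piL2 lam A f ∈ A2 ι lam := by
  classical
  -- first, the holomorphic subspace is preserved
  have key : ∀ g ∈ holo ι lam, piL2 lam A g ∈ holo ι lam := by
    rintro g ⟨G, hG, hge⟩
    refine ⟨G ∘ (uIso (A⁻¹)), ?_, ?_⟩
    · exact hG.comp ((uIso (A⁻¹)).toContinuousLinearEquiv.differentiable.differentiableOn)
        (uIso_mapsTo_ball _)
    · have h1 : (piL2 lam A g : EC ι → ℂ) =ᵐ[mu ι lam] (g : EC ι → ℂ) ∘ (uIso (A⁻¹)) :=
        Lp.coeFn_compMeasurePreserving g (uIso_measurePreserving lam A⁻¹)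
      refine h1.trans ?_
      exact (uIso_measurePreserving lam A⁻¹).quasiMeasurePreserving.ae_eq_comp hge
  -- now pass to the closure
  have hcont : Continuous (piL2 lam A) := (piL2 lam A).continuous
  have hsub : (piL2 lam A) '' (holo ι lam : Set (Lp ℂ 2 (mu ι lam))) ⊆ (holo ι lam : Set _) :=
    fun x ⟨g, hg, hxg⟩ => hxg ▸ key g hg
  have hfc : f ∈ closure (holo ι lam : Set (Lp ℂ 2 (mu ι lam))) := hf
  have : piL2 lam A f ∈ closure ((piL2 lam A) '' (holo ι lam : Set _)) :=
    Set.mem_of_mem_of_subset (Set.mem_image_of_mem _ hfc)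
      (image_closure_subset_closure_image hcont)
  exact closure_mono hsub this

/-- The unitary representation `π_λ` of `U(n)` on the Bergman space `A²_λ(𝔹)`. -/
def piA2 (lam : ℝ) (A : UG ι) : A2 ι lam →L[ℂ] A2 ι lam :=
  ContinuousLinearMap.codRestrict
    (((piL2 lam A).toContinuousLinearMap).comp (A2 ι lam).subtypeL)
    (A2 ι lam) (fun f => piL2_mem_A2 lam A f.2)

end Bergman
namespace Bergman
variable {ι : Type*} [Fintype ι] [DecidableEq ι]

lemma coe_unitary_inv (A : UG ι) : ((A⁻¹ : UG ι) : Matrix ι ι ℂ) = star (A : Matrix ι ι ℂ) := by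
  rw [← Unitary.star_eq_inv]
  rfl

section Subgroups

variable {J : Type*} [Fintype J] [DecidableEq J]

/-- The block-diagonal subgroup `U(k) = U(k₁) × ⋯ × U(k_m)` of `U(n)` determined by the
block assignment `b : ι → J` of the coordinates. -/
def blockSubgroup (b : ι → J) : Subgroup (UG ι) where
  carrier := {A | ∀ p q : ι, b p ≠ b q → (A : Matrix ι ι ℂ) p q = 0}
  one_mem' := by
    intro p q hpq
    exact Matrix.one_apply_ne (fun h => hpq (by rw [h]))
  mul_mem' := by
    intro A B hA hB p q hpq
    show ∑ r, (A : Matrix ι ι ℂ) p r * (B : Matrix ι ι ℂ) r q = 0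
    refine Finset.sum_eq_zero fun r _ => ?_
    by_cases h : b p = b r
    · rw [hB r q (h ▸ hpq), mul_zero]
    · rw [hA p r h, zero_mul]
  inv_mem' := by
    intro A hA p q hpq
    rw [coe_unitary_inv]
    show star ((A : Matrix ι ι ℂ) q p) = 0
    rw [hA q p (Ne.symm hpq), star_zero]

/-- The subgroup `𝕋^m` of `U(n)`: the center of `U(k)`, consisting of the unitary matrices
acting by a scalar on each block. -/
def torusSubgroup (b : ι → J) : Subgroup (UG ι) where
  carrier := {A | ∃ t : J → ℂ, (A : Matrix ι ι ℂ) = Matrix.diagonal fun p => t (b p)}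
  one_mem' := ⟨fun _ => 1, by simp [Matrix.diagonal_one]⟩
  mul_mem' := by
    rintro A B ⟨t, ht⟩ ⟨s, hs⟩
    refine ⟨t * s, ?_⟩
    show (A : Matrix ι ι ℂ) * (B : Matrix ι ι ℂ) = _
    rw [ht, hs, Matrix.diagonal_mul_diagonal]
    rfl
  inv_mem' := by
    rintro A ⟨t, ht⟩
    refine ⟨fun j => starRingEnd ℂ (t j), ?_⟩
    rw [coe_unitary_inv, ht]
    show Matrix.conjTranspose (Matrix.diagonal fun p => t (b p)) = _
    rw [Matrix.diagonal_conjTranspose]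
    rfl

/-- The subgroup `U(k, j₀, 𝕋)` of `U(k)`, obtained by replacing the factor `U(k_{j₀})` by its
center `𝕋`. -/
def UkjT (b : ι → J) (j₀ : J) : Subgroup (UG ι) where
  carrier := {A | A ∈ blockSubgroup b ∧
    ∃ c : ℂ, ∀ p q : ι, b p = j₀ → (A : Matrix ι ι ℂ) p q = if p = q then c else 0}
  one_mem' := by
    refine ⟨(blockSubgroup b).one_mem, 1, fun p q _ => ?_⟩
    show (1 : Matrix ι ι ℂ) p q = _
    rw [Matrix.one_apply]
  mul_mem' := by
    rintro A B ⟨hAb, cA, hA⟩ ⟨hBb, cB, hB⟩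
    refine ⟨(blockSubgroup b).mul_mem hAb hBb, cA * cB, fun p q hp => ?_⟩
    show ∑ r, (A : Matrix ι ι ℂ) p r * (B : Matrix ι ι ℂ) r q = _
    rw [Finset.sum_eq_single p]
    · rw [hA p p hp, if_pos rfl]
      by_cases hq : p = q
      · rw [← hq, hB p p hp, if_pos rfl, if_pos rfl]
      · rw [hB p q hp, if_neg hq, if_neg hq, mul_zero]
    · intro r _ hr
      rw [hA p r hp, if_neg (fun h => hr h.symm), zero_mul]
    · intro h
      exact absurd (Finset.mem_univ p) h
  inv_mem' := by
    rintro A ⟨hAb, c, hA⟩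
    refine ⟨(blockSubgroup b).inv_mem hAb, starRingEnd ℂ c, fun p q hp => ?_⟩
    rw [coe_unitary_inv]
    show star ((A : Matrix ι ι ℂ) q p) = _
    by_cases hq : b q = j₀
    · rw [hA q p hq]
      by_cases h : p = q
      · simp [h]
      · rw [if_neg (fun hh : q = p => h hh.symm), star_zero, if_neg h]
    · have : b q ≠ b p := fun h => hq (h.trans hp)
      rw [hAb q p this, star_zero]
      have hpq : p ≠ q := fun h => hq (h ▸ hp : b q = j₀)
      rw [if_neg hpq]

end Subgroups
end Bergman
namespace Bergman
variable {ι : Type*} [Fintype ι] [DecidableEq ι]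

section Polynomials
variable {J : Type*} [Fintype J] [DecidableEq J]

/-- Evaluation of a polynomial, as a function on `ℂ^ι`. -/
def polyFun (p : MvPolynomial ι ℂ) : EC ι → ℂ := fun z => MvPolynomial.eval (fun i => z i) p

/-- The space of polynomials that are homogeneous of degree `κ j` in the variables
of the block `j`, for every `j`. -/
def multiHomog (b : ι → J) (κ : J → ℕ) : Submodule ℂ (MvPolynomial ι ℂ) where
  carrier := {p | ∀ d ∈ p.support, ∀ j,
    ∑ i ∈ Finset.univ.filter (fun i => b i = j), d i = κ j}
  zero_mem' := by simp
  add_mem' := by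
    intro p q hp hq d hd j
    rcases Finset.mem_union.mp (MvPolynomial.support_add hd) with h | h
    exacts [hp d h j, hq d h j]
  smul_mem' := by
    intro c p hp d hd j
    exact hp d (MvPolynomial.support_smul hd) j

/-- The subspace `P_𝜿(ℂ^n)` of the Bergman space: elements admitting a representative
which is a polynomial, homogeneous of degree `κ j` in the block-`j` variables for every `j`.
(Taking the topological closure records that it is closed.) -/
def polPre (lam : ℝ) (b : ι → J) (κ : J → ℕ) : Submodule ℂ (A2 ι lam) where
  carrier := {f | ∃ p ∈ multiHomog b κ,
    ((f : Lp ℂ 2 (mu ι lam)) : EC ι → ℂ) =ᵐ[mu ι lam] polyFun p}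
  zero_mem' := by
    refine ⟨0, Submodule.zero_mem _, ?_⟩
    refine (Lp.coeFn_zero ℂ 2 (mu ι lam)).trans ?_
    refine Filter.EventuallyEq.of_eq (funext fun z => ?_)
    simp [polyFun]
  add_mem' := by
    rintro f g ⟨p, hp, hep⟩ ⟨q, hq, heq⟩
    refine ⟨p + q, Submodule.add_mem _ hp hq, ?_⟩
    refine (Lp.coeFn_add (f : Lp ℂ 2 (mu ι lam)) (g : Lp ℂ 2 (mu ι lam))).trans ?_
    filter_upwards [hep, heq] with z h1 h2
    simp [polyFun, Pi.add_apply, h1, h2]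
  smul_mem' := by
    rintro c f ⟨p, hp, hep⟩
    refine ⟨c • p, Submodule.smul_mem _ c hp, ?_⟩
    refine (Lp.coeFn_smul c (f : Lp ℂ 2 (mu ι lam))).trans ?_
    filter_upwards [hep] with z h1
    simp [polyFun, Pi.smul_apply, h1, MvPolynomial.smul_eq_C_mul]

/-- The subspace `P_𝜿(ℂ^n)` of the Bergman space. -/
def Pol (lam : ℝ) (b : ι → J) (κ : J → ℕ) : Submodule ℂ (A2 ι lam) :=
  (polPre lam b κ).topologicalClosure

instance (lam : ℝ) (b : ι → J) (κ : J → ℕ) : CompleteSpace (Pol lam b κ) :=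
  (polPre lam b κ).isClosed_topologicalClosure.completeSpace_coe

end Polynomials

section Shortcuts

instance A2innerProductSpace (lam : ℝ) : InnerProductSpace ℂ (A2 ι lam) := inferInstance
instance A2NormedSpace (lam : ℝ) : NormedSpace ℂ (A2 ι lam) := inferInstance
instance A2StarRing (lam : ℝ) : StarRing (A2 ι lam →L[ℂ] A2 ι lam) := inferInstance
instance A2StarModule (lam : ℝ) : StarModule ℂ (A2 ι lam →L[ℂ] A2 ι lam) := inferInstance
instance A2SemitopSemiring (lam : ℝ) : IsSemitopologicalSemiring (A2 ι lam →L[ℂ] A2 ι lam) := by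
  have := NonUnitalSeminormedRing.toIsTopologicalRing (α := A2 ι lam →L[ℂ] A2 ι lam)
  infer_instance
instance A2ContStar (lam : ℝ) : ContinuousStar (A2 ι lam →L[ℂ] A2 ι lam) :=
  ⟨(ContinuousLinearMap.adjoint (𝕜 := ℂ) (E := A2 ι lam) (F := A2 ι lam)).continuous⟩

end Shortcuts

section Operators
variable {J : Type*} [Fintype J] [DecidableEq J]

/-- A symbol `a` is invariant under a set `S` of unitary matrices if `a ∘ A = a`
(almost everywhere) for every `A ∈ S`. -/
def invariantUnder (lam : ℝ) (S : Set (UG ι)) (a : EC ι → ℂ) : Prop :=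
  ∀ A ∈ S, (fun z => a (uIso A z)) =ᵐ[mu ι lam] a

/-- The algebra `End_H(A²_λ)` of bounded operators intertwining `π_λ|_H`. -/
def EndAlg (lam : ℝ) (S : Set (UG ι)) : Subalgebra ℂ (A2 ι lam →L[ℂ] A2 ι lam) :=
  Subalgebra.centralizer ℂ ((fun A => piA2 lam A) '' S)

/-- The trace of the restriction (block) of an operator to an invariant subspace. -/
def traceOn {lam : ℝ} (p : Submodule ℂ (A2 ι lam)) (T : A2 ι lam →L[ℂ] A2 ι lam)
    (hT : ∀ f ∈ p, T f ∈ p) : ℂ :=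
  LinearMap.trace ℂ p ((T : A2 ι lam →ₗ[ℂ] A2 ι lam).restrict hT)

/-- The set of Toeplitz operators with essentially bounded `S`-invariant symbols. -/
def toepSet (lam : ℝ) (S : Set (UG ι)) : Set (A2 ι lam →L[ℂ] A2 ι lam) :=
  {T | ∃ (a : EC ι → ℂ) (ha : MemLp a ⊤ (mu ι lam)), invariantUnder lam S a ∧ T = toeplitz ha}


/-- The C*-algebra generated by the Toeplitz operators with `S`-invariant symbols. -/
def toepCstar (lam : ℝ) (S : Set (UG ι)) : StarSubalgebra ℂ (A2 ι lam →L[ℂ] A2 ι lam) :=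
  (StarAlgebra.adjoin ℂ (toepSet lam S)).topologicalClosure

end Operators

section Coordinates
variable {J : Type*} [Fintype J] [DecidableEq J]

/-- The monomial `z^α`, as a function on `ℂ^ι`. -/
def monFun (α : ι → ℕ) : EC ι → ℂ := fun z => ∏ i, z i ^ α i

/-- A polynomial in the variables of the block `j₀`, as a function on `ℂ^ι`. -/
def blockPolyFun {b : ι → J} {j₀ : J} (p : MvPolynomial {i // b i = j₀} ℂ) : EC ι → ℂ :=
  fun z => MvPolynomial.eval (fun s => z s.1) p

/-- The block component `z_(j)` of `z ∈ ℂ^ι`. -/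
def blockPart (b : ι → J) (j : J) (z : EC ι) : EuclideanSpace ℂ {i // b i = j} :=
  (EuclideanSpace.equiv {i // b i = j} ℂ).symm (fun s => z s.1)

/-- Assembling a point of `ℂ^ι` from radial block parameters and unit block vectors,
`z = (r₁ u₁, …, r_m u_m)`. -/
def assemble (b : ι → J) (r : J → ℝ) (u : ∀ j, EuclideanSpace ℂ {i // b i = j}) : EC ι :=
  (EuclideanSpace.equiv ι ℂ).symm (fun i => (r (b i) : ℂ) * u (b i) ⟨i, rfl⟩)

/-- The "radial simplex" `τ(𝔹^m) = {r ∈ ℝ^m₊ : |r| < 1}`. -/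
def tauSet (J : Type*) [Fintype J] : Set (J → ℝ) :=
  {r | (∀ j, 0 < r j) ∧ ∑ j, (r j) ^ 2 < 1}

end Coordinates
end Bergman
namespace Bergman
variable {ι : Type*} [Fintype ι] [DecidableEq ι]

section PolyAction
variable {σ : Type*} [Fintype σ]

/-- The substitution action of a matrix on polynomials: `(mpolyAct M p)(z) = p(Mz)`. -/
def mpolyAct (M : Matrix σ σ ℂ) (p : MvPolynomial σ ℂ) : MvPolynomial σ ℂ :=
  MvPolynomial.aeval (fun i => ∑ i', MvPolynomial.C (M i i') * MvPolynomial.X i') p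

lemma mpolyAct_isHomogeneous (M : Matrix σ σ ℂ) {p : MvPolynomial σ ℂ} {n : ℕ}
    (hp : p.IsHomogeneous n) : (mpolyAct M p).IsHomogeneous n := by
  have := hp.aeval (fun i => ∑ i', MvPolynomial.C (M i i') * MvPolynomial.X i')
    (fun i => MvPolynomial.IsHomogeneous.sum _ _ 1
      (fun i' _ => MvPolynomial.isHomogeneous_C_mul_X _ _))
  simpa [one_mul, mpolyAct] using this

end PolyAction

section Tensor
variable {J : Type*} [Fintype J] [DecidableEq J]

/-- The group action of `U(n)` on polynomial symbols: `(A · p)(z) = p(A⁻¹ z)`. -/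
def polyGroupAct (A : UG ι) (p : MvPolynomial ι ℂ) : MvPolynomial ι ℂ :=
  mpolyAct ((A⁻¹ : UG ι) : Matrix ι ι ℂ) p

/-- The diagonal block of a matrix corresponding to the block `j` of coordinates. -/
def matrixBlock (b : ι → J) (M : Matrix ι ι ℂ) (j : J) :
    Matrix {i // b i = j} {i // b i = j} ℂ :=
  fun s t => M s.1 t.1

/-- The action of an element of the block subgroup on the `j`-th tensor factor
(polynomials in the block-`j` variables). -/
def blockGroupAct (b : ι → J) (A : UG ι) (j : J) (p : MvPolynomial {i // b i = j} ℂ) :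
    MvPolynomial {i // b i = j} ℂ :=
  mpolyAct (matrixBlock b ((A⁻¹ : UG ι) : Matrix ι ι ℂ) j) p

/-- The space `P_κ(ℂ^{k_j})` of homogeneous polynomials of degree `κ j` in the
variables of the block `j`. -/
abbrev homogBlock (b : ι → J) (j : J) (κj : ℕ) : Submodule ℂ (MvPolynomial {i // b i = j} ℂ) :=
  MvPolynomial.homogeneousSubmodule {i // b i = j} ℂ κj

/-- The canonical map `U_𝜿 : ⊗_j P_{κ_j}(ℂ^{k_j}) → P_𝜿(ℂ^n)`,
sending `p₁ ⊗ ⋯ ⊗ p_m` to the product polynomial `z ↦ p₁(z_(1)) ⋯ p_m(z_(m))`. -/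
def Ukappa (b : ι → J) (κ : J → ℕ) :
    (⨂[ℂ] j : J, ↥(homogBlock b j (κ j))) →ₗ[ℂ] MvPolynomial ι ℂ :=
  PiTensorProduct.lift
    ((MultilinearMap.mkPiAlgebra ℂ J (MvPolynomial ι ℂ)).compLinearMap
      (fun j => (MvPolynomial.rename (Subtype.val : {i // b i = j} → ι)).toLinearMap.comp
        (homogBlock b j (κ j)).subtype))

end Tensor
end Bergman

/-!
`π_λ(A)` is unitary and preserves `A²_λ`, so it commutes with the Bergman projection, and
conjugating `T_a` by it gives `T_{a ∘ A}`. Hence `T_a` intertwines `π_λ(A)` iff `T_{a ∘ A} = T_a`,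
and the theorem reduces to the injectivity of `a ↦ T_a`. If `T_c = 0`, then
`∫ c p q̄ dv_λ = ⟪q, T_c p⟫ = 0` for all entire `p, q`. These products span a star algebra that
separates points, so by Stone–Weierstrass `c` is orthogonal to every continuous function on the
closed ball, which carries the finite (as `λ > -1`) measure `v_λ`; thus `c = 0` a.e.
-/

theorem integrableOn_one_sub_norm_sq_rpow {E : Type*} [NormedAddCommGroup E] [NormedSpace ℝ E]
    [FiniteDimensional ℝ E] [MeasurableSpace E] [BorelSpace E] (μ : Measure E)
    [μ.IsAddHaarMeasure] {lam : ℝ} (hlam : -1 < lam) :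
    IntegrableOn (fun x : E => (1 - ‖x‖ ^ 2) ^ lam) (ball 0 1) μ := by
  rcases subsingleton_or_nontrivial E with hE | hE
  · simp [Subsingleton.elim _ (0 : E)]
  rw [integrableOn_fun_norm_addHaar μ (f := fun r => (1 - r ^ 2) ^ lam)]
  have hsing : IntegrableOn (fun y : ℝ => (1 - y) ^ lam) (Set.Icc 0 1) := by
    have := (intervalIntegral.intervalIntegrable_rpow' hlam (a := 0) (b := 1)).comp_sub_left 1
    rw [sub_zero, sub_self] at this
    exact (intervalIntegrable_iff_integrableOn_Icc_of_le zero_le_one).mp this.symm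
  have hreg : ContinuousOn (fun y : ℝ => y ^ (Module.finrank ℝ E - 1) * (1 + y) ^ lam)
      (Set.Icc 0 1) :=
    (continuousOn_pow _).mul <| (continuousOn_const.add continuousOn_id).rpow_const
      fun y hy => .inl (by linarith [hy.1] : (0 : ℝ) < 1 + y).ne'
  refine ((hsing.continuousOn_mul hreg isCompact_Icc).mono_set Set.Ioo_subset_Icc_self).congr_fun
    (fun y hy => ?_) measurableSet_Ioo
  have hfactor : 1 - y ^ 2 = (1 + y) * (1 - y) := by ring
  rw [smul_eq_mul, hfactor, Real.mul_rpow (x := 1 + y) (y := 1 - y) (by linarith [hy.1])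
    (by linarith [hy.2])]
  exact mul_assoc _ _ _

theorem MeasureTheory.Integrable.continuous_smul_of_ae_mem_compact {X 𝕜 F : Type*}
    [TopologicalSpace X] [MeasurableSpace X] [OpensMeasurableSpace X] [NormedRing 𝕜]
    [SecondCountableTopologyEither X 𝕜]
    [NormedAddCommGroup F] [Module 𝕜 F] [IsBoundedSMul 𝕜 F] {μ : Measure X} {K : Set X}
    (hK : IsCompact K) (hμK : ∀ᵐ x ∂μ, x ∈ K) {c : X → F} (hc : Integrable c μ) {φ : X → 𝕜}
    (hφ : Continuous φ) : Integrable (fun x => φ x • c x) μ := by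
  obtain ⟨C, hC⟩ := hK.exists_bound_of_continuousOn hφ.continuousOn
  exact hc.bdd_smul C hφ.aestronglyMeasurable (by filter_upwards [hμK] with x hx using hC x hx)

theorem ae_eq_zero_of_forall_integral_smul_eq_zero_of_separatesPoints {E F : Type*}
    [NormedAddCommGroup E] [NormedSpace ℝ E] [FiniteDimensional ℝ E] [MeasurableSpace E]
    [BorelSpace E] [NormedAddCommGroup F] [NormedSpace ℝ F] [CompleteSpace F]
    {μ : Measure E} {K : Set E} (hK : IsCompact K) (hμK : ∀ᵐ x ∂μ, x ∈ K) {c : E → F}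
    (hc : Integrable c μ) {A : Subalgebra ℝ C(E, ℝ)} (hA : A.SeparatesPoints)
    (h : ∀ f ∈ A, ∫ x, f x • c x ∂μ = 0) : c =ᵐ[μ] 0 := by
  refine ae_eq_zero_of_integral_contDiff_smul_eq_zero hc.locallyIntegrable fun g hg _ => ?_
  refine norm_le_zero_iff.mp (le_of_forall_pos_le_add fun ε hε => ?_)
  set C := ∫ x, ‖c x‖ ∂μ
  have hC : 0 ≤ C := integral_nonneg fun x => norm_nonneg _
  obtain ⟨f, hfA, hfg⟩ :=
    ContinuousMap.exists_mem_subalgebra_near_continuous_of_isCompact_of_separatesPoints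
      hA ⟨g, hg.continuous⟩ hK (ε := ε / (C + 1)) (by positivity)
  have hgc := hc.continuous_smul_of_ae_mem_compact hK hμK hg.continuous
  have hfc := hc.continuous_smul_of_ae_mem_compact hK hμK f.continuous
  calc ‖∫ x, g x • c x ∂μ‖ = ‖∫ x, (g x - f x) • c x ∂μ‖ := by
        simp only [sub_smul]
        rw [integral_sub hgc hfc, h f hfA, sub_zero]
    _ ≤ ∫ x, ε / (C + 1) * ‖c x‖ ∂μ := by
        refine norm_integral_le_of_norm_le (hc.norm.const_mul _) ?_
        filter_upwards [hμK] with x hx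
        rw [norm_smul, norm_sub_rev]
        exact mul_le_mul_of_nonneg_right (hfg x hx).le (norm_nonneg _)
    _ = ε / (C + 1) * C := integral_const_mul _ _
    _ ≤ 0 + ε := by
        rw [zero_add, div_mul_eq_mul_div, div_le_iff₀ (by positivity)]
        nlinarith

def entireSubalgebra (E : Type*) [NormedAddCommGroup E] [NormedSpace ℂ E] :
    Subalgebra ℂ C(E, ℂ) where
  carrier := {f | Differentiable ℂ f}
  mul_mem' := Differentiable.mul
  add_mem' := Differentiable.add
  algebraMap_mem' c := differentiable_const c

theorem entireSubalgebra_separatesPoints (E : Type*) [NormedAddCommGroup E] [NormedSpace ℂ E] :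
    (entireSubalgebra E).SeparatesPoints := by
  intro x y hxy
  obtain ⟨φ, hφ⟩ := SeparatingDual.exists_separating_of_ne (R := ℂ) hxy
  exact ⟨φ, ⟨(φ : C(E, ℂ)), φ.differentiable, rfl⟩, hφ⟩

namespace Bergman

section Weight
variable {ι : Type*} [Fintype ι]

lemma ae_mem_closedBall_mu (lam : ℝ) : ∀ᵐ z ∂(mu ι lam), z ∈ closedBall (0 : EC ι) 1 :=
  (withDensity_absolutelyContinuous _ _).ae_le
    ((ae_restrict_mem measurableSet_ball).mono fun _ hz => ball_subset_closedBall hz)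

lemma isFiniteMeasure_mu {lam : ℝ} (hlam : -1 < lam) : IsFiniteMeasure (mu ι lam) :=
  isFiniteMeasure_withDensity_ofReal
    ((integrableOn_one_sub_norm_sq_rpow volume hlam).const_mul (normConst ι lam)).2

lemma memLp_mu_of_continuous {lam : ℝ} (hlam : -1 < lam) {f : EC ι → ℂ} (hf : Continuous f)
    (p : ℝ≥0∞) : MemLp f p (mu ι lam) := by
  have := isFiniteMeasure_mu (ι := ι) hlam
  obtain ⟨C, hC⟩ := (isCompact_closedBall (0 : EC ι) 1).exists_bound_of_continuousOn
    hf.continuousOn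
  refine MemLp.of_bound hf.aestronglyMeasurable C ?_
  filter_upwards [ae_mem_closedBall_mu lam] with z hz using hC z hz

lemma exists_A2_ae_eq_of_differentiable {lam : ℝ} (hlam : -1 < lam) {f : EC ι → ℂ}
    (hf : Differentiable ℂ f) : ∃ F : A2 ι lam, (F : EC ι → ℂ) =ᵐ[mu ι lam] f :=
  have hmem := memLp_mu_of_continuous hlam hf.continuous 2
  ⟨⟨hmem.toLp f, Submodule.le_topologicalClosure _ ⟨f, hf.differentiableOn, hmem.coeFn_toLp⟩⟩,
    hmem.coeFn_toLp⟩

lemma integrable_mul_of_continuous {lam : ℝ} (hlam : -1 < lam) {c : EC ι → ℂ}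
    (hc : MemLp c ⊤ (mu ι lam)) {F : EC ι → ℂ} (hF : Continuous F) :
    Integrable (fun z => F z * c z) (mu ι lam) := by
  have := isFiniteMeasure_mu (ι := ι) hlam
  simpa only [smul_eq_mul] using (hc.integrable le_top).continuous_smul_of_ae_mem_compact
    (isCompact_closedBall 0 1) (ae_mem_closedBall_mu lam) hF

end Weight

section Multiplication
variable {ι : Type*} [Fintype ι] [DecidableEq ι] {lam : ℝ}

lemma mulSymb_coeFn {a : EC ι → ℂ} (ha : MemLp a ⊤ (mu ι lam)) (f : Lp ℂ 2 (mu ι lam)) :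
    (mulSymb ha f : EC ι → ℂ) =ᵐ[mu ι lam] a • (f : EC ι → ℂ) :=
  ((Lp.memLp f).smul ha).coeFn_toLp

lemma mulSymb_congr {a b : EC ι → ℂ} (ha : MemLp a ⊤ (mu ι lam)) (hb : MemLp b ⊤ (mu ι lam))
    (hab : a =ᵐ[mu ι lam] b) : mulSymb ha = mulSymb hb := by
  ext1 f
  refine Lp.ext ((mulSymb_coeFn ha f).trans (.trans ?_ (mulSymb_coeFn hb f).symm))
  filter_upwards [hab] with z hz
  simp only [Pi.smul_apply', hz]

lemma mulSymb_sub {a b : EC ι → ℂ} (ha : MemLp a ⊤ (mu ι lam)) (hb : MemLp b ⊤ (mu ι lam)) :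
    mulSymb (ha.sub hb) = mulSymb ha - mulSymb hb := by
  ext1 f
  refine Lp.ext ?_
  filter_upwards [mulSymb_coeFn (ha.sub hb) f, mulSymb_coeFn ha f, mulSymb_coeFn hb f,
    Lp.coeFn_sub (mulSymb ha f) (mulSymb hb f)] with z hab hza hzb hsub
  simp only [sub_apply, hsub, hab, Pi.sub_apply, hza, hzb, Pi.smul_apply', sub_smul]

lemma toeplitz_congr {a b : EC ι → ℂ} (ha : MemLp a ⊤ (mu ι lam)) (hb : MemLp b ⊤ (mu ι lam))
    (hab : a =ᵐ[mu ι lam] b) : toeplitz ha = toeplitz hb := by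
  rw [toeplitz, toeplitz, mulSymb_congr ha hb hab]

lemma toeplitz_sub {a b : EC ι → ℂ} (ha : MemLp a ⊤ (mu ι lam)) (hb : MemLp b ⊤ (mu ι lam)) :
    toeplitz (ha.sub hb) = toeplitz ha - toeplitz hb := by
  rw [toeplitz, toeplitz, toeplitz, mulSymb_sub, ContinuousLinearMap.sub_comp,
    ContinuousLinearMap.comp_sub]

end Multiplication

section Equivariance
variable {ι : Type*} [Fintype ι] [DecidableEq ι] {lam : ℝ}

lemma uIso_mul_apply (A B : UG ι) (z : EC ι) : uIso (A * B) z = uIso A (uIso B z) := by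
  rw [uIso, map_mul, map_mul]
  rfl

lemma uIso_one_apply (z : EC ι) : uIso (1 : UG ι) z = z := by
  rw [uIso, map_one, map_one]
  rfl

lemma piL2_coeFn (A : UG ι) (f : Lp ℂ 2 (mu ι lam)) :
    (piL2 lam A f : EC ι → ℂ) =ᵐ[mu ι lam] f ∘ uIso A⁻¹ :=
  Lp.coeFn_compMeasurePreserving f (uIso_measurePreserving lam A⁻¹)

lemma piL2_mul_apply (A B : UG ι) (f : Lp ℂ 2 (mu ι lam)) :
    piL2 lam A (piL2 lam B f) = piL2 lam (A * B) f := by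
  refine Lp.ext ((piL2_coeFn A _).trans (.trans ?_ (piL2_coeFn (A * B) f).symm))
  filter_upwards [(uIso_measurePreserving lam A⁻¹).quasiMeasurePreserving.ae_eq_comp
    (piL2_coeFn B f)] with z hz
  simp only [hz, Function.comp_apply, mul_inv_rev, uIso_mul_apply]

lemma piL2_one_apply (f : Lp ℂ 2 (mu ι lam)) : piL2 lam 1 f = f := by
  refine Lp.ext ((piL2_coeFn 1 f).trans (.of_forall fun z => ?_))
  simp only [Function.comp_apply, inv_one, uIso_one_apply]

lemma bProj_piL2 (A : UG ι) (f : Lp ℂ 2 (mu ι lam)) :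
    (bProj ι lam (piL2 lam A f) : Lp ℂ 2 (mu ι lam)) = piL2 lam A (bProj ι lam f) := by
  refine Submodule.eq_starProjection_of_mem_of_inner_eq_zero
    (piL2_mem_A2 lam A (bProj ι lam f).2) fun w hw => ?_
  rw [← (piL2 lam A).map_sub, ← piL2_one_apply w, ← mul_inv_cancel A, ← piL2_mul_apply,
    (piL2 lam A).inner_map_map]
  exact Submodule.starProjection_inner_eq_zero f _ (piL2_mem_A2 lam A⁻¹ hw)

lemma piA2_injective (A : UG ι) : Function.Injective (piA2 lam A) :=
  fun _ _ h => Subtype.ext ((piL2 lam A).injective (congrArg Subtype.val h))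

lemma mulSymb_piL2 {a : EC ι → ℂ} (ha : MemLp a ⊤ (mu ι lam)) (A : UG ι)
    (f : Lp ℂ 2 (mu ι lam)) :
    mulSymb ha (piL2 lam A f) =
      piL2 lam A (mulSymb (ha.comp_measurePreserving (uIso_measurePreserving lam A)) f) := by
  set haA := ha.comp_measurePreserving (uIso_measurePreserving lam A)
  refine Lp.ext ((mulSymb_coeFn ha _).trans (.trans ?_ (piL2_coeFn A _).symm))
  filter_upwards [piL2_coeFn A f,
    (uIso_measurePreserving lam A⁻¹).quasiMeasurePreserving.ae_eq_comp (mulSymb_coeFn haA f)]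
    with z hf haf
  simp only [Function.comp_apply, Pi.smul_apply'] at hf haf ⊢
  rw [hf, haf, ← uIso_mul_apply, mul_inv_cancel, uIso_one_apply]

lemma toeplitz_comp_piA2 {a : EC ι → ℂ} (ha : MemLp a ⊤ (mu ι lam)) (A : UG ι) :
    (toeplitz ha).comp (piA2 lam A) =
      (piA2 lam A).comp (toeplitz (ha.comp_measurePreserving (uIso_measurePreserving lam A))) := by
  ext1 f
  refine Subtype.ext ?_
  change (bProj ι lam (mulSymb ha (piL2 lam A f)) : Lp ℂ 2 (mu ι lam)) = piL2 lam A _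
  rw [mulSymb_piL2, bProj_piL2]
  rfl

end Equivariance

section Injectivity
variable {ι : Type*} [Fintype ι] [DecidableEq ι] {lam : ℝ}

lemma integral_conj_mul_eq_zero_of_toeplitz_eq_zero {c : EC ι → ℂ} (hc : MemLp c ⊤ (mu ι lam))
    (hT : toeplitz hc = 0) (f g : A2 ι lam) :
    ∫ z, conj ((g : EC ι → ℂ) z) * (c z * (f : EC ι → ℂ) z) ∂(mu ι lam) = 0 := by
  have horth : mulSymb hc f ∈ (A2 ι lam)ᗮ :=
    Submodule.orthogonalProjectionOnto_eq_zero_iff.mp (congrArg (· f) hT)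
  rw [← (Submodule.mem_orthogonal _ _).mp horth g g.2, L2.inner_def]
  refine integral_congr_ae ?_
  filter_upwards [mulSymb_coeFn hc f] with z hz
  simp only [hz, RCLike.inner_apply, Pi.smul_apply', smul_eq_mul]
  ring

lemma integral_mul_eq_zero_of_mem_starClosure (hlam : -1 < lam) {c : EC ι → ℂ}
    (hc : MemLp c ⊤ (mu ι lam)) (hT : toeplitz hc = 0) {F : C(EC ι, ℂ)}
    (hF : F ∈ (entireSubalgebra (EC ι)).starClosure) : ∫ z, F z * c z ∂(mu ι lam) = 0 := by
  rw [Subalgebra.mem_starClosure, ← Subalgebra.mem_toSubmodule, ← Subalgebra.mul_toSubmodule]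
    at hF
  refine Submodule.mul_induction_on hF (fun p hp q hq => ?_) (fun F G hF hG => ?_)
  · obtain ⟨P, hP⟩ := exists_A2_ae_eq_of_differentiable hlam (f := ⇑p) hp
    obtain ⟨Q, hQ⟩ := exists_A2_ae_eq_of_differentiable hlam (f := ⇑(star q))
      ((Subalgebra.mem_star_iff (entireSubalgebra (EC ι)) q).mp hq)
    rw [← integral_conj_mul_eq_zero_of_toeplitz_eq_zero hc hT P Q]
    refine integral_congr_ae ?_
    filter_upwards [hP, hQ] with z hPz hQz
    simp only [hPz, hQz, ContinuousMap.mul_apply, ContinuousMap.star_apply, Complex.star_def,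
      Complex.conj_conj]
    ring
  · simp only [ContinuousMap.add_apply, add_mul]
    rw [integral_add (integrable_mul_of_continuous hlam hc F.continuous)
      (integrable_mul_of_continuous hlam hc G.continuous), hF, hG, add_zero]

lemma ae_eq_zero_of_toeplitz_eq_zero (hlam : -1 < lam) {c : EC ι → ℂ}
    (hc : MemLp c ⊤ (mu ι lam)) (hT : toeplitz hc = 0) : c =ᵐ[mu ι lam] 0 := by
  have := isFiniteMeasure_mu (ι := ι) hlam
  refine ae_eq_zero_of_forall_integral_smul_eq_zero_of_separatesPoints
    (isCompact_closedBall (0 : EC ι) 1) (ae_mem_closedBall_mu lam) (hc.integrable le_top)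
    (Subalgebra.SeparatesPoints.rclike_to_real (A := (entireSubalgebra (EC ι)).starClosure)
      (Subalgebra.separatesPoints_monotone le_sup_left (entireSubalgebra_separatesPoints _)))
    fun f hf => ?_
  convert integral_mul_eq_zero_of_mem_starClosure hlam hc hT hf using 3 with z
  exact Complex.real_smul

lemma toeplitz_injective (hlam : -1 < lam) {a b : EC ι → ℂ} (ha : MemLp a ⊤ (mu ι lam))
    (hb : MemLp b ⊤ (mu ι lam)) (h : toeplitz ha = toeplitz hb) : a =ᵐ[mu ι lam] b := by
  filter_upwards [ae_eq_zero_of_toeplitz_eq_zero hlam (ha.sub hb)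
    (by rw [toeplitz_sub ha hb, h, sub_self])] with z hz
  exact sub_eq_zero.mp hz

end Injectivity

theorem toeplitz_intertwines_iff_invariant_general {n : ℕ} (lam : ℝ) (hlam : -1 < lam)
    (H : Subgroup (UG (Fin n)))
    (a : EC (Fin n) → ℂ) (ha : MemLp a ⊤ (mu (Fin n) lam)) :
    (∀ A ∈ H, (fun z => a (uIso A z)) =ᵐ[mu (Fin n) lam] a) ↔
      (∀ A ∈ H, (toeplitz ha).comp (piA2 lam A) = (piA2 lam A).comp (toeplitz ha)) := by
  refine forall₂_congr fun A _ => ?_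
  have haA := ha.comp_measurePreserving (uIso_measurePreserving lam A)
  rw [toeplitz_comp_piA2 ha A]
  refine ⟨fun hinv => by rw [toeplitz_congr haA ha hinv], fun hcomm => ?_⟩
  exact toeplitz_injective hlam haA ha
    (ContinuousLinearMap.ext fun f => piA2_injective A (congrArg (· f) hcomm))

/-- Corollary: `H`-invariant symbols and intertwining Toeplitz operators.
For a closed subgroup `H ≤ U(n)`, a symbol `a ∈ L^∞(𝔹^n)` and `λ > -1`, the following are
equivalent: (1) `a` is `H`-invariant (`a ∘ A = a` for all `A ∈ H`); (2) the Toeplitz operator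
`T_a^{(λ)}` intertwines `π_λ|_H` (`T_a^{(λ)} π_λ(A) = π_λ(A) T_a^{(λ)}` for all `A ∈ H`). -/
theorem toeplitz_intertwines_iff_invariant {n : ℕ} (lam : ℝ) (hlam : -1 < lam)
    (H : Subgroup (UG (Fin n))) (hH : IsClosed (H : Set (UG (Fin n))))
    (a : EC (Fin n) → ℂ) (ha : MemLp a ⊤ (mu (Fin n) lam)) :
    (∀ A ∈ H, (fun z => a (uIso A z)) =ᵐ[mu (Fin n) lam] a) ↔
      (∀ A ∈ H, (toeplitz ha).comp (piA2 lam A) = (piA2 lam A).comp (toeplitz ha)) :=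
  toeplitz_intertwines_iff_invariant_general lam hlam H a ha

end Bergman
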